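/- Let α > 0 with n < α < n+1 for a natural number n, and let f be (n+1)-times continuously differentiable on [a, x]. Define the Letnikov derivative via formula (with s ≥ n an integer and f (s+1)-times continuously differentiable): G_s := ∑_{k=0}^{s} f^{(k)}(a)(x-a)^{k-α}/Γ(k-α+1) + (1/Γ(s-α+1)) ∫_a^x (x-τ)^{s-α} f^{(s+1)}(τ) dτ. Then G_{s+1} = G_s, i.e., the value is independent of the choice of s ≥ n. -/

import Mathlib

open intervalIntegral Real

/-!
Integrating by parts with `u τ = (x - τ) ^ p` and `v = f⁽ˢ⁺¹⁾` moves one derivative from `f` onto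
the kernel: the boundary term at `τ = x` vanishes because `p = s + 1 - α > 0`, the one at `τ = a`
is the new summand `f⁽ˢ⁺¹⁾(a) (x - a) ^ p`, and the factor `p` produced by differentiating the
kernel is absorbed by `Γ(p + 1) = p Γ(p)`.
-/

open Set Topology MeasureTheory

theorem ContDiffOn.hasDerivAt_iteratedDerivWithin {𝕜 F : Type*} [NontriviallyNormedField 𝕜]
    [NormedAddCommGroup F] [NormedSpace 𝕜 F] {f : 𝕜 → F} {s : Set 𝕜} {m : ℕ} {τ : 𝕜}
    (hf : ContDiffOn 𝕜 (m + 1) f s) (hs : UniqueDiffOn 𝕜 s) (hτ : s ∈ 𝓝 τ) :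
    HasDerivAt (iteratedDerivWithin m f s) (iteratedDerivWithin (m + 1) f s τ) τ := by
  rw [iteratedDerivWithin_succ]
  have hdiff := hf.differentiableOn_iteratedDerivWithin (m := m) (by norm_cast; omega) hs
  exact (hdiff τ (mem_of_mem_nhds hτ)).hasDerivWithinAt.hasDerivAt hτ

theorem intervalIntegrable_sub_rpow (x : ℝ) {q : ℝ} (hq : -1 < q) (a b : ℝ) :
    IntervalIntegrable (fun τ => (x - τ) ^ q) volume a b := by
  simpa using (intervalIntegrable_rpow' hq (a := x - a) (b := x - b)).comp_sub_left x

theorem integral_sub_rpow_mul_deriv {a x p : ℝ} {g g' : ℝ → ℝ} (hax : a ≤ x) (hp : 0 < p)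
    (hg : ContinuousOn g (Icc a x)) (hgg' : ∀ τ ∈ Ioo a x, HasDerivAt g (g' τ) τ)
    (hg' : IntervalIntegrable g' volume a x) :
    ∫ τ in a..x, (x - τ) ^ p * g' τ =
      p * (∫ τ in a..x, (x - τ) ^ (p - 1) * g τ) - (x - a) ^ p * g a := by
  have hu : ContinuousOn (fun τ => (x - τ) ^ p) (Icc a x) :=
    (continuous_const.sub continuous_id).continuousOn.rpow_const fun _ _ => Or.inr hp.le
  have huu' : ∀ τ ∈ Ioo a x,
      HasDerivAt (fun τ => (x - τ) ^ p) (-1 * p * (x - τ) ^ (p - 1)) τ := fun τ hτ =>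
    ((hasDerivAt_id τ).const_sub x).rpow_const (Or.inl (sub_ne_zero.2 hτ.2.ne'))
  have hu' : IntervalIntegrable (fun τ => -1 * p * (x - τ) ^ (p - 1)) volume a x :=
    (intervalIntegrable_sub_rpow x (by linarith) a x).const_mul _
  have ibp := integral_mul_deriv_eq_deriv_mul_of_hasDerivAt (a := a) (b := x)
    (u := fun τ => (x - τ) ^ p) (u' := fun τ => -1 * p * (x - τ) ^ (p - 1)) (v := g) (v' := g')
  simp only [uIcc_of_le hax, min_eq_left hax, max_eq_right hax] at ibp
  rw [ibp hu hg huu' hgg' hu' hg', sub_self, zero_rpow hp.ne']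
  simp only [mul_assoc, intervalIntegral.integral_const_mul]
  ring

theorem letnikov_term_add_remainder {a x p : ℝ} {g g' : ℝ → ℝ} (hax : a ≤ x) (hp : 0 < p)
    (hg : ContinuousOn g (Icc a x)) (hgg' : ∀ τ ∈ Ioo a x, HasDerivAt g (g' τ) τ)
    (hg' : IntervalIntegrable g' volume a x) :
    g a * (x - a) ^ p / Gamma (p + 1) + 1 / Gamma (p + 1) * ∫ τ in a..x, (x - τ) ^ p * g' τ =
      1 / Gamma p * ∫ τ in a..x, (x - τ) ^ (p - 1) * g τ := by
  rw [integral_sub_rpow_mul_deriv hax hp hg hgg' hg', Gamma_add_one hp.ne']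
  generalize ∫ τ in a..x, (x - τ) ^ (p - 1) * g τ = I
  field_simp [hp.ne', (Gamma_pos_of_pos hp).ne']
  ring

theorem letnikov_formula_consistency_general
    (a x α : ℝ) (hax : a < x) (n s : ℕ) (hns : n ≤ s)
    (hα2 : α < n + 1)
    (f : ℝ → ℝ) (hf : ContDiffOn ℝ (s + 2) f (Set.Icc a x)) :
    ((∑ k ∈ Finset.range (s + 2),
        iteratedDerivWithin k f (Set.Icc a x) a * (x - a) ^ ((k : ℝ) - α) /
          Real.Gamma ((k : ℝ) - α + 1)) +
      (1 / Real.Gamma ((s : ℝ) + 1 - α + 1)) *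
        ∫ τ in a..x, (x - τ) ^ ((s : ℝ) + 1 - α) *
          iteratedDerivWithin (s + 2) f (Set.Icc a x) τ) =
    ((∑ k ∈ Finset.range (s + 1),
        iteratedDerivWithin k f (Set.Icc a x) a * (x - a) ^ ((k : ℝ) - α) /
          Real.Gamma ((k : ℝ) - α + 1)) +
      (1 / Real.Gamma ((s : ℝ) - α + 1)) *
        ∫ τ in a..x, (x - τ) ^ ((s : ℝ) - α) *
          iteratedDerivWithin (s + 1) f (Set.Icc a x) τ) := by
  have hsα : α < s + 1 := hα2.trans_le (by exact_mod_cast Nat.succ_le_succ hns)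
  have hIcc : UniqueDiffOn ℝ (Icc a x) := uniqueDiffOn_Icc hax
  have step := letnikov_term_add_remainder (p := s + 1 - α) hax.le (by linarith)
    (hf.continuousOn_iteratedDerivWithin (m := s + 1) (by norm_cast; omega) hIcc)
    (fun τ hτ => hf.hasDerivAt_iteratedDerivWithin hIcc (Icc_mem_nhds hτ.1 hτ.2))
    ((hf.continuousOn_iteratedDerivWithin le_rfl hIcc).intervalIntegrable_of_Icc hax.le)
  rw [Finset.sum_range_succ, add_assoc, show ((s + 1 : ℕ) : ℝ) - α = s + 1 - α by push_cast; ring,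
    show (s : ℝ) - α + 1 = s + 1 - α by ring, show (s : ℝ) - α = s + 1 - α - 1 by ring, step]

theorem letnikov_formula_consistency
    (a x α : ℝ) (hax : a < x) (n s : ℕ) (hns : n ≤ s)
    (hα1 : (n : ℝ) < α) (hα2 : α < n + 1)
    (f : ℝ → ℝ) (hf : ContDiffOn ℝ (s + 2) f (Set.Icc a x)) :
    ((∑ k ∈ Finset.range (s + 2),
        iteratedDerivWithin k f (Set.Icc a x) a * (x - a) ^ ((k : ℝ) - α) /
          Real.Gamma ((k : ℝ) - α + 1)) +
      (1 / Real.Gamma ((s : ℝ) + 1 - α + 1)) *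
        ∫ τ in a..x, (x - τ) ^ ((s : ℝ) + 1 - α) *
          iteratedDerivWithin (s + 2) f (Set.Icc a x) τ) =
    ((∑ k ∈ Finset.range (s + 1),
        iteratedDerivWithin k f (Set.Icc a x) a * (x - a) ^ ((k : ℝ) - α) /
          Real.Gamma ((k : ℝ) - α + 1)) +
      (1 / Real.Gamma ((s : ℝ) - α + 1)) *
        ∫ τ in a..x, (x - τ) ^ ((s : ℝ) - α) *
          iteratedDerivWithin (s + 1) f (Set.Icc a x) τ) :=
  letnikov_formula_consistency_general a x α hax n s hns hα2 f hf
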